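/- arXiv:2011.10773 — 4 statements merged into one kernel-verified Lean document; each statement's English description precedes it below -/
import Mathlib

section
/- Let ε ∈ (0,1), D > 0, and let n ≥ 1 be a natural number with n < −log ε / D; set ξ := −log ε / n, so ξ > D. Let D̃ : (1,∞) → [0,∞] be a nondecreasing function with lim_{s→1⁺} D̃(s) = D. Let α ∈ [0,1] and β ∈ (0,1] satisfy β ≤ ε and, for every s > 1 with D̃(s) < ∞, (1/n)·log(1−α) ≤ ((s−1)/s)·(D̃(s) + (1/n)·log β). Then α ≥ 1 − ε^κ, where κ := sup_{s>1} ((s−1)/s)·(ξ − D̃(s))/ξ, and moreover 0 < κ < 1. -/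
open scoped ENNReal

/-- **Analytic core of the strong converse (Lemma 1).**
Let `ε ∈ (0,1)`, `D > 0`, `1 ≤ n < −log ε / D` and `ξ = −log ε / n` (so `ξ > D`).
Let `D̃ : (1,∞) → [0,∞]` be nondecreasing with limit `D` as `s → 1⁺`. If
`β ≤ ε` and the Mosonyi–Ogawa bound
`(1/n)·log(1−α) ≤ ((s−1)/s)·(D̃(s) + (1/n)·log β)` holds for every `s > 1`
with `D̃(s) < ∞`, then `α ≥ 1 − ε^κ` where
`κ = sup_{s>1, D̃(s)<∞} ((s−1)/s)·(ξ − D̃(s))/ξ`, and `0 < κ < 1`. -/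
theorem strong_converse_type_one_error_bound
    (ε D : ℝ) (hε : ε ∈ Set.Ioo (0 : ℝ) 1) (hD : 0 < D)
    (n : ℕ) (hn1 : 1 ≤ n) (hn : (n : ℝ) < -Real.log ε / D)
    (ξ : ℝ) (hξ : ξ = -Real.log ε / n)
    (Dt : ℝ → ℝ≥0∞)
    (hmono : ∀ s t : ℝ, 1 < s → s ≤ t → Dt s ≤ Dt t)
    (hlim : Filter.Tendsto Dt (nhdsWithin 1 (Set.Ioi 1)) (nhds (ENNReal.ofReal D)))
    (α β : ℝ) (hα : α ∈ Set.Icc (0 : ℝ) 1) (hβ : β ∈ Set.Ioc (0 : ℝ) 1)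
    (hβε : β ≤ ε)
    (hMO : ∀ s : ℝ, 1 < s → Dt s ≠ ∞ →
      (1 / (n : ℝ)) * Real.log (1 - α)
        ≤ ((s - 1) / s) * ((Dt s).toReal + (1 / (n : ℝ)) * Real.log β))
    (κ : ℝ)
    (hκ : κ = sSup {y : ℝ | ∃ s : ℝ, 1 < s ∧ Dt s ≠ ∞ ∧
      y = ((s - 1) / s) * ((ξ - (Dt s).toReal) / ξ)}) :
    α ≥ 1 - ε ^ κ ∧ 0 < κ ∧ κ < 1 := by
  obtain ⟨hε0, hε1⟩ := hε
  have hlogε : Real.log ε < 0 := Real.log_neg hε0 hε1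
  have hnR : (0:ℝ) < n := by exact_mod_cast hn1
  have hξD : D < ξ := by
    rw [hξ, lt_div_iff₀ hnR]
    have := (lt_div_iff₀ hD).mp hn
    linarith
  have hξ0 : 0 < ξ := lt_trans hD hξD
  have hlognξ : Real.log ε = -((n:ℝ) * ξ) := by
    rw [hξ]; field_simp
  set S := {y : ℝ | ∃ s : ℝ, 1 < s ∧ Dt s ≠ ∞ ∧
      y = ((s - 1) / s) * ((ξ - (Dt s).toReal) / ξ)} with hS
  -- existence of s₀ with Dt s₀ < ofReal ξ
  have hex : ∃ s, 1 < s ∧ Dt s < ENNReal.ofReal ξ := by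
    have h1 : ENNReal.ofReal D < ENNReal.ofReal ξ :=
      (ENNReal.ofReal_lt_ofReal_iff hξ0).mpr hξD
    have h2 := hlim.eventually (Iio_mem_nhds h1)
    have h3 := h2.and (eventually_mem_nhdsWithin (a := (1:ℝ)) (s := Set.Ioi 1))
    obtain ⟨s, hs1, hs2⟩ := h3.exists
    exact ⟨s, hs2, hs1⟩
  obtain ⟨s₀, hs₀1, hs₀lt⟩ := hex
  have hs₀fin : Dt s₀ ≠ ∞ := ne_top_of_lt hs₀lt
  have hd₀ : (Dt s₀).toReal < ξ := ENNReal.toReal_lt_of_lt_ofReal hs₀lt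
  -- D is a lower bound for Dt on (1,∞)
  have hDle : ∀ s, 1 < s → Dt s ≠ ∞ → D ≤ (Dt s).toReal := by
    intro s hs hfin
    have hle : ENNReal.ofReal D ≤ Dt s := by
      refine le_of_tendsto hlim ?_
      filter_upwards [self_mem_nhdsWithin,
        nhdsWithin_le_nhds (Iio_mem_nhds hs)] with t ht1 ht2
      exact hmono t s ht1 (le_of_lt ht2)
    exact (ENNReal.ofReal_le_iff_le_toReal hfin).mp hle
  have hy₀pos : 0 < ((s₀-1)/s₀) * ((ξ - (Dt s₀).toReal)/ξ) := by
    apply mul_pos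
    · apply div_pos <;> linarith
    · apply div_pos <;> linarith
  have hy₀S : ((s₀-1)/s₀) * ((ξ - (Dt s₀).toReal)/ξ) ∈ S := ⟨s₀, hs₀1, hs₀fin, rfl⟩
  have hne : S.Nonempty := ⟨_, hy₀S⟩
  have hbdd : ∀ y ∈ S, y ≤ (ξ - D)/ξ := by
    rintro y ⟨s, hs1, hfin, rfl⟩
    have hDs := hDle s hs1 hfin
    have hs0 : 0 < s := by linarith
    have hc1 : (s-1)/s < 1 := by rw [div_lt_one hs0]; linarith
    have hc0 : 0 < (s-1)/s := div_pos (by linarith) hs0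
    rw [mul_div_assoc', div_le_div_iff_of_pos_right hξ0]
    nlinarith [mul_nonneg (by linarith : (0:ℝ) ≤ 1 - (s-1)/s)
        (by linarith : (0:ℝ) ≤ ξ - D),
      mul_nonneg hc0.le (by linarith : (0:ℝ) ≤ (Dt s).toReal - D)]
  have hbdda : BddAbove S := ⟨(ξ - D)/ξ, fun y hy => hbdd y hy⟩
  have hκub : κ ≤ (ξ - D)/ξ := by rw [hκ]; exact csSup_le hne hbdd
  have hκ1 : κ < 1 := lt_of_le_of_lt hκub (by rw [div_lt_one hξ0]; linarith)
  have hκ0 : 0 < κ :=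
    lt_of_lt_of_le hy₀pos (by rw [hκ]; exact le_csSup hbdda hy₀S)
  refine ⟨?_, hκ0, hκ1⟩
  have hεκpos : 0 < ε ^ κ := Real.rpow_pos_of_pos hε0 κ
  rcases eq_or_lt_of_le hα.2 with h1 | h1
  · linarith
  · have h1α : 0 < 1 - α := by linarith
    have hlogβ : (1/(n:ℝ)) * Real.log β ≤ -ξ := by
      have hb : Real.log β ≤ Real.log ε := Real.log_le_log hβ.1 hβε
      rw [hlognξ] at hb
      rw [one_div, inv_mul_le_iff₀ hnR]
      linarith
    have key : ∀ y ∈ S, y ≤ Real.log (1-α) / Real.log ε := by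
      rintro y ⟨s, hs1, hfin, rfl⟩
      have hs0 : 0 < s := by linarith
      have hc0 : 0 < (s-1)/s := div_pos (by linarith) hs0
      have h2 : (1/(n:ℝ)) * Real.log (1-α)
          ≤ ((s-1)/s) * ((Dt s).toReal - ξ) :=
        calc (1/(n:ℝ)) * Real.log (1-α)
            ≤ ((s-1)/s) * ((Dt s).toReal + (1/(n:ℝ))*Real.log β) := hMO s hs1 hfin
          _ ≤ ((s-1)/s) * ((Dt s).toReal - ξ) := by
              apply mul_le_mul_of_nonneg_left _ hc0.le
              linarith
      rw [one_div, inv_mul_le_iff₀ hnR] at h2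
      rw [le_div_iff_of_neg hlogε]
      have heq : ((s-1)/s) * ((ξ - (Dt s).toReal)/ξ) * Real.log ε
          = (n:ℝ) * (((s-1)/s) * ((Dt s).toReal - ξ)) := by
        rw [hlognξ]; field_simp; ring
      rw [heq]; exact h2
    have hκle : κ ≤ Real.log (1-α)/Real.log ε := by
      rw [hκ]; exact csSup_le hne key
    have hle2 : Real.log (1-α) ≤ κ * Real.log ε := (le_div_iff_of_neg hlogε).mp hκle
    have hfin2 : (1:ℝ) - α ≤ ε ^ κ := by
      rw [Real.rpow_def_of_pos hε0]
      calc 1 - α = Real.exp (Real.log (1-α)) := (Real.exp_log h1α).symm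
        _ ≤ Real.exp (Real.log ε * κ) := by
            apply Real.exp_le_exp.mpr
            nlinarith [mul_comm κ (Real.log ε)]
    linarith
end

section
/- (Lemma 3.) Let ρ and σ be d×d positive definite complex matrices of trace 1. Let {E_i}_{i∈I} be a finite family of nonzero pairwise-orthogonal Hermitian projections summing to the identity, each commuting with both ρ and σ, and let {F_k} be a finite family of pairwise-orthogonal Hermitian projections summing to the identity that refines {E_i} (each F_k satisfies F_k E_i = F_k for exactly one index i). For each i set a_i := tr(E_i ρ E_i), b_i := tr(E_i σ E_i), ρ_i := (1/a_i)·E_i ρ E_i, and σ_i := (1/b_i)·E_i σ E_i, regarded as positive definite trace-one operators on the range of E_i, and let ε_F(σ_i) denote the pinching of σ_i by the projections F_k contained in E_i. Then Re tr(ρ·(log ε_F(σ) − log σ)) = ∑_i a_i · Re tr(ρ_i·(log ε_F(σ_i) − log σ_i)) ≤ max_i Re tr(ρ_i·(log ε_F(σ_i) − log σ_i)). -/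
/-
Every `F k` commutes with every `E i`, since `F k * E i` is `F k` or `0` and so self-adjoint;
hence each `E i` commutes with `σ` and with its pinching `T`. If a projection `P` commutes with a
Hermitian `A` and `f 0 = 0`, then `f (A * P) = f A * P`: replace `f` by an interpolating
polynomial without constant term. As `Real.log 0 = 0` this applies to `log`, and with
`log (c • A) = Real.log c • 1 + log A` the normalisations `b i` cancel, so the correction term
of the `i`-th block is `(log T - log σ) * E i`. Splitting `ρ = ∑ i, E i * ρ * E i` gives the
identity, and the bound holds because the weights `a i` are positive and sum to `tr ρ = 1`.
-/

open scoped ComplexOrder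

/-- Functional-calculus (spectral) logarithm of a Hermitian matrix:
the eigenvalues are replaced by their (natural) logarithms in a spectral
decomposition; junk value `0` on non-Hermitian input. -/
noncomputable def matLog {m : Type*} [Fintype m] [DecidableEq m]
    (A : Matrix m m ℂ) : Matrix m m ℂ :=
  if hA : A.IsHermitian then
    (hA.eigenvectorUnitary : Matrix m m ℂ) *
      Matrix.diagonal (fun i => (Real.log (hA.eigenvalues i) : ℂ)) *
      star (hA.eigenvectorUnitary : Matrix m m ℂ)
  else 0

open Polynomial Matrix

theorem Polynomial.aeval_mul_idempotent {R A : Type*} [CommSemiring R] [Semiring A] [Algebra R A]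
    {a e : A} (hae : Commute a e) (he : IsIdempotentElem e) {p : R[X]} (hp : p.coeff 0 = 0) :
    aeval (a * e) p = aeval a p * e := by
  rw [aeval_eq_sum_range, aeval_eq_sum_range, Finset.sum_mul]
  refine Finset.sum_congr rfl fun m _ => ?_
  cases m with
  | zero => simp [hp]
  | succ m => rw [hae.mul_pow, he.pow_succ_eq, smul_mul_assoc]

theorem Set.Finite.exists_polynomial_eval_eq {s : Set ℝ} (hs : s.Finite) (f : ℝ → ℝ) :
    ∃ q : ℝ[X], ∀ x ∈ s, q.eval x = f x := by
  have := hs.to_subtype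
  obtain ⟨q, hq⟩ := (exists_eval_eq_iff (fun x : s => (x : ℝ)) (fun x => f x)).mpr
    fun x y hxy => by rw [hxy]
  exact ⟨q, fun x hx => hq ⟨x, hx⟩⟩

theorem commute_of_mul_eq_self_of_orthogonal {R ι : Type*} [NonUnitalSemiring R] [StarRing R]
    {E : ι → R} (hE : ∀ i, IsSelfAdjoint (E i)) (hEorth : ∀ i j, i ≠ j → E i * E j = 0)
    {F : R} (hF : IsSelfAdjoint F) {i₀ : ι} (hFi₀ : F * E i₀ = F) (i : ι) :
    Commute F (E i) := by
  by_cases hi : i = i₀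
  · subst hi
    exact IsSelfAdjoint.commute_of_mul_eq_isSelfAdjoint F (E i) F hF (hE i) hF hFi₀
  · refine IsSelfAdjoint.commute_of_mul_eq_isSelfAdjoint F (E i) 0 hF (hE i)
      (IsSelfAdjoint.zero R) ?_
    rw [← hFi₀, mul_assoc, hEorth i₀ i (Ne.symm hi), mul_zero]

section OrthogonalDecomposition

variable {R ι : Type*} [Fintype ι] [Semiring R] {P : ι → R}

theorem sum_mul_mul_eq_self (hP : ∀ i, IsIdempotentElem (P i)) (hsum : ∑ i, P i = 1) {X : R}
    (hX : ∀ i, Commute (P i) X) : ∑ i, P i * X * P i = X := by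
  simp_rw [(hX _).eq, mul_assoc, (hP _).eq, ← Finset.mul_sum, hsum, mul_one]

theorem sum_mul_mul_mul_of_commute {F : ι → R} {P X : R} (hFP : ∀ k, Commute (F k) P) :
    ∑ k, F k * (X * P) * F k = (∑ k, F k * X * F k) * P := by
  simp_rw [Finset.sum_mul, mul_assoc, (hFP _).symm.eq]

end OrthogonalDecomposition

theorem sum_mul_le_ciSup {ι : Type*} [Fintype ι] {a : ι → ℝ} (ha : ∀ i, 0 ≤ a i)
    (hsum : ∑ i, a i = 1) (t : ι → ℝ) : ∑ i, a i * t i ≤ ⨆ i, t i :=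
  calc ∑ i, a i * t i ≤ ∑ i, a i * ⨆ j, t j := Finset.sum_le_sum fun i _ =>
        mul_le_mul_of_nonneg_left (le_ciSup (Set.finite_range t).bddAbove i) (ha i)
    _ = ⨆ j, t j := by rw [← Finset.sum_mul, hsum, one_mul]

namespace Matrix

variable {n : Type*} [Fintype n] [DecidableEq n]

theorem trace_mul_eq_sum_trace_mul_mul {R ι : Type*} [CommSemiring R] [Fintype ι]
    {P : ι → Matrix n n R} (hP : ∀ i, IsIdempotentElem (P i)) (hsum : ∑ i, P i = 1)
    {X : Matrix n n R} (hX : ∀ i, Commute (P i) X) (D : Matrix n n R) :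
    (X * D).trace = ∑ i, (P i * X * P i * (D * P i)).trace := by
  conv_lhs => rw [← sum_mul_mul_eq_self hP hsum hX]
  rw [Finset.sum_mul, trace_sum]
  refine Finset.sum_congr rfl fun i _ => ?_
  rw [← mul_assoc, trace_mul_comm _ (P i)]
  simp only [← mul_assoc, (hP i).eq]

theorem PosDef.sum_mul_mul {𝕜 ι : Type*} [RCLike 𝕜] [Fintype ι] {A : Matrix n n 𝕜}
    (hA : A.PosDef) {F : ι → Matrix n n 𝕜} (hF : ∀ k, (F k).IsHermitian)
    (hFsum : ∑ k, F k = 1) : (∑ k, F k * A * F k).PosDef := by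
  have hpsd : ∀ k, (F k * A * F k).PosSemidef := fun k => by
    simpa only [(hF k).eq] using hA.posSemidef.conjTranspose_mul_mul_same (F k)
  refine of_dotProduct_mulVec_pos (posSemidef_sum _ fun k _ => hpsd k).isHermitian fun x hx => ?_
  have hquad : star x ⬝ᵥ (∑ k, F k * A * F k) *ᵥ x
      = ∑ k, star (F k *ᵥ x) ⬝ᵥ A *ᵥ (F k *ᵥ x) := by
    simp_rw [sum_mulVec, dotProduct_sum, ← mulVec_mulVec]
    refine Finset.sum_congr rfl fun k _ => ?_
    rw [dotProduct_mulVec, star_mulVec, (hF k).eq]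
  obtain ⟨k, hk⟩ : ∃ k, F k *ᵥ x ≠ 0 := by
    by_contra! h
    apply hx
    rw [← one_mulVec x, ← hFsum, sum_mulVec, Finset.sum_eq_zero fun k _ => h k]
  rw [hquad]
  exact Finset.sum_pos' (fun k _ => hA.posSemidef.dotProduct_mulVec_nonneg _)
    ⟨k, Finset.mem_univ k, hA.dotProduct_mulVec_pos hk⟩

theorem PosDef.re_trace_mul_mul_pos {A P : Matrix n n ℂ} (hA : A.PosDef)
    (hP : IsStarProjection P) (hP0 : P ≠ 0) (hAP : Commute A P) : 0 < (P * A * P).trace.re := by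
  have hPAP : (P * A * P).PosSemidef := by
    simpa only [show Pᴴ = P from hP.isSelfAdjoint] using
      hA.posSemidef.conjTranspose_mul_mul_same P
  have hne : (P * A * P).trace ≠ 0 := by
    rw [Ne, hPAP.trace_eq_zero_iff, ← hAP.eq, mul_assoc, hP.isIdempotentElem.eq,
      hA.isUnit.mul_right_eq_zero]
    exact hP0
  exact (Complex.lt_def.mp (lt_of_le_of_ne hPAP.trace_nonneg hne.symm)).1

theorem cfc_mul_of_commute_isStarProjection {𝕜 : Type*} [RCLike 𝕜] {A P : Matrix n n 𝕜}
    (hA : A.IsHermitian) (hP : IsStarProjection P) (hAP : Commute A P) {f : ℝ → ℝ}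
    (hf : f 0 = 0) : cfc f (A * P) = cfc f A * P := by
  have hAP' : IsSelfAdjoint (A * P) := (IsSelfAdjoint.commute_iff hA hP.isSelfAdjoint).mp hAP
  obtain ⟨q, hq⟩ := Set.Finite.exists_polynomial_eval_eq
    (s := {0} ∪ spectrum ℝ A ∪ spectrum ℝ (A * P))
    (((Set.finite_singleton 0).union finite_real_spectrum).union finite_real_spectrum) f
  have hq0 : q.coeff 0 = 0 := by
    rw [coeff_zero_eq_eval_zero, hq 0 (by simp), hf]
  have hAq : cfc f A = aeval A q := by
    rw [← cfc_polynomial q A]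
    exact cfc_congr fun x hx => (hq x (by simp [hx])).symm
  have hAPq : cfc f (A * P) = aeval (A * P) q := by
    rw [← cfc_polynomial q (A * P)]
    exact cfc_congr fun x hx => (hq x (by simp [hx])).symm
  rw [hAq, hAPq, aeval_mul_idempotent hAP hP.isIdempotentElem hq0]

theorem matLog_eq_cfc {A : Matrix n n ℂ} (hA : A.IsHermitian) : matLog A = cfc Real.log A := by
  rw [IsHermitian.cfc_eq, matLog, dif_pos hA]
  rfl

theorem matLog_mul_of_commute_isStarProjection {A P : Matrix n n ℂ} (hA : A.IsHermitian)
    (hP : IsStarProjection P) (hAP : Commute A P) : matLog (A * P) = matLog A * P := by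
  rw [matLog_eq_cfc hA, matLog_eq_cfc ((IsSelfAdjoint.commute_iff hA hP.isSelfAdjoint).mp hAP),
    cfc_mul_of_commute_isStarProjection hA hP hAP Real.log_zero]

open scoped MatrixOrder in
theorem matLog_smul {A : Matrix n n ℂ} (hA : A.PosDef) {c : ℝ} (hc : c ≠ 0) :
    matLog (c • A) = Real.log c • 1 + matLog A := by
  rw [matLog_eq_cfc (hA.isHermitian.smul (IsSelfAdjoint.all c)), matLog_eq_cfc hA.isHermitian,
    ← cfc_comp_const_mul c Real.log A ((finite_real_spectrum.image _).continuousOn _)]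
  calc cfc (fun x => Real.log (c * x)) A = cfc (fun x => Real.log c + Real.log x) A :=
        cfc_congr fun x hx => Real.log_mul hc (hA.isStrictlyPositive.spectrum_pos hx).ne'
    _ = Real.log c • 1 + cfc Real.log A := by
      rw [cfc_const_add _ _ _ (finite_real_spectrum.continuousOn _),
        Algebra.algebraMap_eq_smul_one]

theorem matLog_smul_mul_of_commute_isStarProjection {A P : Matrix n n ℂ} (hA : A.PosDef)
    (hP : IsStarProjection P) (hAP : Commute A P) {c : ℝ} (hc : c ≠ 0) :
    matLog (c • (A * P)) = (Real.log c • 1 + matLog A) * P := by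
  rw [← smul_mul_assoc, matLog_mul_of_commute_isStarProjection
    (hA.isHermitian.smul (IsSelfAdjoint.all c)) hP (hAP.smul_left c), matLog_smul hA hc]

theorem matLog_pinching_sub_matLog_smul_mul_mul {ι : Type*} [Fintype ι]
    {σ P : Matrix n n ℂ} (hσ : σ.PosDef) (hP : IsStarProjection P) (hσP : Commute σ P)
    {F : ι → Matrix n n ℂ} (hF : ∀ k, (F k).IsHermitian) (hFsum : ∑ k, F k = 1)
    (hFP : ∀ k, Commute (F k) P) {c : ℝ} (hc : c ≠ 0) :
    matLog (∑ k, F k * (c • (P * σ * P)) * F k) - matLog (c • (P * σ * P))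
      = (matLog (∑ k, F k * σ * F k) - matLog σ) * P := by
  have hPσP : P * σ * P = σ * P := by rw [← hσP.eq, mul_assoc, hP.isIdempotentElem.eq]
  have hTP : Commute (∑ k, F k * σ * F k) P :=
    Commute.sum_left _ _ _ fun k _ => ((hFP k).mul_left hσP).mul_left (hFP k)
  simp_rw [hPσP, Matrix.mul_smul, Matrix.smul_mul, ← Finset.smul_sum,
    sum_mul_mul_mul_of_commute hFP,
    matLog_smul_mul_of_commute_isStarProjection (hσ.sum_mul_mul hF hFsum) hP hTP hc,
    matLog_smul_mul_of_commute_isStarProjection hσ hP hσP hc, ← sub_mul,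
    add_sub_add_left_eq_sub]

end Matrix

theorem pinching_correction_block_decomposition_general
    {d : ℕ} (ρ σ : Matrix (Fin d) (Fin d) ℂ)
    (hρ : ρ.PosDef) (hσ : σ.PosDef) (hρtr : ρ.trace = 1)
    {ι κ : Type*} [Fintype ι] [Fintype κ]
    (E : ι → Matrix (Fin d) (Fin d) ℂ)
    (hEne : ∀ i, E i ≠ 0)
    (hEherm : ∀ i, (E i).IsHermitian)
    (hEproj : ∀ i, E i * E i = E i)
    (hEorth : ∀ i j, i ≠ j → E i * E j = 0)
    (hEsum : ∑ i, E i = 1)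
    (hEρ : ∀ i, E i * ρ = ρ * E i)
    (hEσ : ∀ i, E i * σ = σ * E i)
    (F : κ → Matrix (Fin d) (Fin d) ℂ)
    (hFherm : ∀ k, (F k).IsHermitian)
    (hFsum : ∑ k, F k = 1)
    (hrefine : ∀ k, ∃! i, F k * E i = F k)
    (a b : ι → ℝ)
    (ha : ∀ i, a i = ((E i * ρ * E i).trace).re)
    (hb : ∀ i, b i = ((E i * σ * E i).trace).re)
    (ρblk σblk : ι → Matrix (Fin d) (Fin d) ℂ)
    (hρblk : ∀ i, ρblk i = (a i)⁻¹ • (E i * ρ * E i))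
    (hσblk : ∀ i, σblk i = (b i)⁻¹ • (E i * σ * E i)) :
    ((ρ * (matLog (∑ k, F k * σ * F k) - matLog σ)).trace).re
        = ∑ i, a i *
            ((ρblk i * (matLog (∑ k, F k * σblk i * F k)
              - matLog (σblk i))).trace).re ∧
    ((ρ * (matLog (∑ k, F k * σ * F k) - matLog σ)).trace).re
        ≤ ⨆ i, ((ρblk i * (matLog (∑ k, F k * σblk i * F k)
              - matLog (σblk i))).trace).re := by
  have hE : ∀ i, IsStarProjection (E i) := fun i => ⟨hEproj i, hEherm i⟩
  have hFE : ∀ k i, Commute (F k) (E i) := fun k i => by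
    obtain ⟨i₀, hi₀, -⟩ := hrefine k
    exact commute_of_mul_eq_self_of_orthogonal hEherm hEorth (hFherm k) hi₀ i
  have ha_pos : ∀ i, 0 < a i := fun i => by
    rw [ha]; exact hρ.re_trace_mul_mul_pos (hE i) (hEne i) (hEρ i).symm
  have hb_pos : ∀ i, 0 < b i := fun i => by
    rw [hb]; exact hσ.re_trace_mul_mul_pos (hE i) (hEne i) (hEσ i).symm
  have hsplit : ((ρ * (matLog (∑ k, F k * σ * F k) - matLog σ)).trace).re = ∑ i, a i *
      ((ρblk i * (matLog (∑ k, F k * σblk i * F k) - matLog (σblk i))).trace).re := by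
    rw [trace_mul_eq_sum_trace_mul_mul (fun i => (hE i).isIdempotentElem) hEsum hEρ,
      Complex.re_sum]
    refine Finset.sum_congr rfl fun i _ => ?_
    rw [hρblk i, hσblk i, matLog_pinching_sub_matLog_smul_mul_mul hσ (hE i) (hEσ i).symm hFherm
      hFsum (hFE · i) (inv_ne_zero (hb_pos i).ne'), smul_mul, trace_smul, Complex.smul_re,
      smul_eq_mul, mul_inv_cancel_left₀ (ha_pos i).ne']
  have ha_sum : ∑ i, a i = 1 := by
    simp_rw [ha, ← Complex.re_sum, ← trace_sum,
      sum_mul_mul_eq_self (fun i => (hE i).isIdempotentElem) hEsum hEρ, hρtr, Complex.one_re]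
  exact ⟨hsplit, hsplit ▸ sum_mul_le_ciSup (fun i => (ha_pos i).le) ha_sum _⟩

/-- **Lemma 3 (block decomposition of the pinching correction term).**
If the projections `E i` commute with `ρ` and `σ` and the pinching family
`{F k}` refines `{E i}`, then the correction term
`Re tr(ρ (log ε_F(σ) − log σ))` decomposes as a convex combination
`∑ i a_i · Re tr(ρ_i (log ε_F(σ_i) − log σ_i))` over the normalized blocks,
and is therefore bounded by the largest block term.
(Here blocks are kept as `d×d` matrices supported on the range of `E i`;
since `Real.log 0 = 0`, `matLog` of a block operator agrees on that range with
the logarithm taken on the range of `E i`, and the pinching of `σ_i` by all of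
the `F k` agrees with the pinching by the `F k` contained in `E i`.) -/
theorem pinching_correction_block_decomposition
    {d : ℕ} (ρ σ : Matrix (Fin d) (Fin d) ℂ)
    (hρ : ρ.PosDef) (hσ : σ.PosDef) (hρtr : ρ.trace = 1) (hσtr : σ.trace = 1)
    {ι κ : Type*} [Fintype ι] [Fintype κ]
    (E : ι → Matrix (Fin d) (Fin d) ℂ)
    (hEne : ∀ i, E i ≠ 0)
    (hEherm : ∀ i, (E i).IsHermitian)
    (hEproj : ∀ i, E i * E i = E i)
    (hEorth : ∀ i j, i ≠ j → E i * E j = 0)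
    (hEsum : ∑ i, E i = 1)
    (hEρ : ∀ i, E i * ρ = ρ * E i)
    (hEσ : ∀ i, E i * σ = σ * E i)
    (F : κ → Matrix (Fin d) (Fin d) ℂ)
    (hFherm : ∀ k, (F k).IsHermitian)
    (hFproj : ∀ k, F k * F k = F k)
    (hForth : ∀ k l, k ≠ l → F k * F l = 0)
    (hFsum : ∑ k, F k = 1)
    (hrefine : ∀ k, ∃! i, F k * E i = F k)
    (a b : ι → ℝ)
    (ha : ∀ i, a i = ((E i * ρ * E i).trace).re)
    (hb : ∀ i, b i = ((E i * σ * E i).trace).re)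
    (ρblk σblk : ι → Matrix (Fin d) (Fin d) ℂ)
    (hρblk : ∀ i, ρblk i = (a i)⁻¹ • (E i * ρ * E i))
    (hσblk : ∀ i, σblk i = (b i)⁻¹ • (E i * σ * E i)) :
    ((ρ * (matLog (∑ k, F k * σ * F k) - matLog σ)).trace).re
        = ∑ i, a i *
            ((ρblk i * (matLog (∑ k, F k * σblk i * F k)
              - matLog (σblk i))).trace).re ∧
    ((ρ * (matLog (∑ k, F k * σ * F k) - matLog σ)).trace).re
        ≤ ⨆ i, ((ρblk i * (matLog (∑ k, F k * σblk i * F k)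
              - matLog (σblk i))).trace).re :=
  pinching_correction_block_decomposition_general ρ σ hρ hσ hρtr E hEne hEherm hEproj hEorth hEsum
    hEρ hEσ F hFherm hFsum hrefine a b ha hb ρblk σblk hρblk hσblk
end

section
/- Let ψ₀, ψ₁ be unit vectors in ℂ^d and let E₀, E₁, E₂ be positive semidefinite d×d complex matrices with E₀ + E₁ + E₂ = I (a three-outcome POVM). Suppose the POVM is unambiguous: ⟨ψ₀, E₁ ψ₀⟩ = 0 and ⟨ψ₁, E₀ ψ₁⟩ = 0. Then the inconclusive probabilities c₀ := ⟨ψ₀, E₂ ψ₀⟩ and c₁ := ⟨ψ₁, E₂ ψ₁⟩ satisfy c₀ · c₁ ≥ |⟨ψ₀, ψ₁⟩|². -/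
/-!
Unambiguity forces `E₁ ψ₀ = 0` and `E₀ ψ₁ = 0`, so resolving the identity as `E₀ + E₁ + E₂`
gives `⟨ψ₀, ψ₁⟩ = ⟨ψ₀, E₂ ψ₁⟩`. The positive semidefinite matrix `E₂` defines a
semi-inner product, and Cauchy–Schwarz for it bounds `|⟨ψ₀, E₂ ψ₁⟩|²` by
`⟨ψ₀, E₂ ψ₀⟩ ⟨ψ₁, E₂ ψ₁⟩ = c₀ c₁`.
-/

open Matrix
open scoped ComplexOrder

namespace Matrix

variable {𝕜 n : Type*} [RCLike 𝕜] [Fintype n]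

namespace PosSemidef

variable {A : Matrix n n 𝕜}

theorem norm_star_dotProduct_mulVec_sq_le (hA : A.PosSemidef) (x y : n → 𝕜) :
    ‖star x ⬝ᵥ (A *ᵥ y)‖ ^ 2 ≤
      RCLike.re (star x ⬝ᵥ (A *ᵥ x)) * RCLike.re (star y ⬝ᵥ (A *ᵥ y)) := by
  let := A.toSeminormedAddCommGroup hA
  let := A.toInnerProductSpace hA
  have hinner (u v : n → 𝕜) : inner 𝕜 u v = star u ⬝ᵥ (A *ᵥ v) := dotProduct_comm _ _
  have h := inner_mul_inner_self_le (𝕜 := 𝕜) x y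
  rw [norm_inner_symm y x, ← sq] at h
  simpa only [hinner] using h

theorem star_dotProduct_mulVec_eq_zero_of_left (hA : A.PosSemidef) {x : n → 𝕜}
    (hx : star x ⬝ᵥ (A *ᵥ x) = 0) (y : n → 𝕜) : star x ⬝ᵥ (A *ᵥ y) = 0 := by
  have h := hA.norm_star_dotProduct_mulVec_sq_le x y
  rw [hx, map_zero, zero_mul] at h
  simpa using h

theorem star_dotProduct_mulVec_eq_zero_of_right (hA : A.PosSemidef) {y : n → 𝕜}
    (hy : star y ⬝ᵥ (A *ᵥ y) = 0) (x : n → 𝕜) : star x ⬝ᵥ (A *ᵥ y) = 0 := by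
  rw [(hA.dotProduct_mulVec_zero_iff y).mp hy, dotProduct_zero]

end PosSemidef

theorem star_dotProduct_eq_of_unambiguous [DecidableEq n] {ψ₀ ψ₁ : n → 𝕜}
    {E₀ E₁ E₂ : Matrix n n 𝕜} (hE₀ : E₀.PosSemidef) (hE₁ : E₁.PosSemidef)
    (hsum : E₀ + E₁ + E₂ = 1) (hunamb₀ : star ψ₀ ⬝ᵥ (E₁ *ᵥ ψ₀) = 0)
    (hunamb₁ : star ψ₁ ⬝ᵥ (E₀ *ᵥ ψ₁) = 0) :
    star ψ₀ ⬝ᵥ ψ₁ = star ψ₀ ⬝ᵥ (E₂ *ᵥ ψ₁) := by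
  calc star ψ₀ ⬝ᵥ ψ₁ = star ψ₀ ⬝ᵥ ((E₀ + E₁ + E₂) *ᵥ ψ₁) := by rw [hsum, one_mulVec]
    _ = star ψ₀ ⬝ᵥ (E₂ *ᵥ ψ₁) := by
      rw [add_mulVec, add_mulVec, dotProduct_add, dotProduct_add,
        hE₀.star_dotProduct_mulVec_eq_zero_of_right hunamb₁,
        hE₁.star_dotProduct_mulVec_eq_zero_of_left hunamb₀, zero_add, zero_add]

end Matrix

theorem unambiguous_discrimination_tradeoff_general
    {d : ℕ} (ψ₀ ψ₁ : Fin d → ℂ)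
    (E₀ E₁ E₂ : Matrix (Fin d) (Fin d) ℂ)
    (hE₀ : E₀.PosSemidef) (hE₁ : E₁.PosSemidef) (hE₂ : E₂.PosSemidef)
    (hsum : E₀ + E₁ + E₂ = 1)
    (hunamb₀ : star ψ₀ ⬝ᵥ (E₁ *ᵥ ψ₀) = 0)
    (hunamb₁ : star ψ₁ ⬝ᵥ (E₀ *ᵥ ψ₁) = 0) :
    (star ψ₀ ⬝ᵥ (E₂ *ᵥ ψ₀)).re * (star ψ₁ ⬝ᵥ (E₂ *ᵥ ψ₁)).re
      ≥ ‖star ψ₀ ⬝ᵥ ψ₁‖ ^ 2 := by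
  rw [star_dotProduct_eq_of_unambiguous hE₀ hE₁ hsum hunamb₀ hunamb₁]
  exact hE₂.norm_star_dotProduct_mulVec_sq_le ψ₀ ψ₁

/-- **Tradeoff for unambiguous discrimination of two pure states.**
If `{E₀, E₁, E₂}` is a POVM on `ℂ^d` which is unambiguous for the unit vectors
`ψ₀, ψ₁` (outcome `1` never occurs on `ψ₀`, outcome `0` never occurs on `ψ₁`),
then the inconclusive probabilities satisfy `c₀·c₁ ≥ |⟨ψ₀,ψ₁⟩|²`. -/
theorem unambiguous_discrimination_tradeoff
    {d : ℕ} (ψ₀ ψ₁ : Fin d → ℂ)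
    (hψ₀ : star ψ₀ ⬝ᵥ ψ₀ = 1) (hψ₁ : star ψ₁ ⬝ᵥ ψ₁ = 1)
    (E₀ E₁ E₂ : Matrix (Fin d) (Fin d) ℂ)
    (hE₀ : E₀.PosSemidef) (hE₁ : E₁.PosSemidef) (hE₂ : E₂.PosSemidef)
    (hsum : E₀ + E₁ + E₂ = 1)
    (hunamb₀ : star ψ₀ ⬝ᵥ (E₁ *ᵥ ψ₀) = 0)
    (hunamb₁ : star ψ₁ ⬝ᵥ (E₀ *ᵥ ψ₁) = 0) :
    (star ψ₀ ⬝ᵥ (E₂ *ᵥ ψ₀)).re * (star ψ₁ ⬝ᵥ (E₂ *ᵥ ψ₁)).re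
      ≥ ‖star ψ₀ ⬝ᵥ ψ₁‖ ^ 2 :=
  unambiguous_discrimination_tradeoff_general ψ₀ ψ₁ E₀ E₁ E₂ hE₀ hE₁ hE₂ hsum hunamb₀ hunamb₁
end

section
/- Let r₀, r₁ ∈ [0,1) and θ ∈ ℝ, and define the 2×2 density matrices ρ = (1/2)(I + r₀(cos θ · σ_z + sin θ · σ_x)) and σ = (1/2)(I + r₁ · σ_z), where σ_x, σ_z are the Pauli matrices. Then the quantum relative entropy satisfies D(ρ‖σ) = (1/2)(1+r₀)·log((1+r₀)/(1+r₁)) + (1/2)(1−r₀)·log((1−r₀)/(1−r₁)) + r₀·sin²(θ/2)·log((1+r₁)/(1−r₁)). In particular D(ρ‖σ) = D(λ₀‖λ₁) + r₀·sin²(θ/2)·log((1+r₁)/(1−r₁)), where D(λ₀‖λ₁) is the binary relative entropy between the spectra {(1±r₀)/2} and {(1±r₁)/2}. -/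
/-- Quantum relative entropy `D(A‖B) = Re tr(A (log A − log B))`. -/
noncomputable def qRelEnt {m : Type*} [Fintype m] [DecidableEq m]
    (A B : Matrix m m ℂ) : ℝ :=
  ((A * (matLog A - matLog B)).trace).re

/-- The Pauli matrix `σ_x`. -/
def pauliX : Matrix (Fin 2) (Fin 2) ℂ := !![0, 1; 1, 0]

/-- The Pauli matrix `σ_z`. -/
def pauliZ : Matrix (Fin 2) (Fin 2) ℂ := !![1, 0; 0, -1]

/-!
A qubit state `ρ = ½(1 + r M)` with `M² = 1` satisfies `(ρ - (1-r)/2)(ρ - (1+r)/2) = 0`, so its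
spectrum lies in `{(1 ± r)/2}` and `log ρ = α ρ + β`, where `x ↦ α x + β` is the secant line of
`log` through these two points. Hence `D(ρ‖σ) = α₀ tr ρ² + β₀ - α₁ tr ρσ - β₁`, and everything
reduces to `tr ρ² = (1 + r₀²)/2`, `tr ρσ = (1 + r₀ r₁ cos θ)/2` and `α r = log (1+r) - log (1-r)`.
-/

open Polynomial in
theorem spectrum_subset_pair_of_mul_eq_zero {𝕜 A : Type*} [Field 𝕜] [Ring A] [Algebra 𝕜 A]
    {a : A} {x y : 𝕜} (h : (a - algebraMap 𝕜 A x) * (a - algebraMap 𝕜 A y) = 0) :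
    spectrum 𝕜 a ⊆ {x, y} := by
  nontriviality A
  apply Set.image_subset_iff.mp (spectrum.subset_polynomial_aeval a ((X - C x) * (X - C y)))
    |>.trans
  intro z hz
  simpa [h, sub_eq_zero] using hz

theorem eq_slope_mul_add_of_mem_pair (f : ℝ → ℝ) {a b x : ℝ} (hx : x ∈ ({a, b} : Set ℝ)) :
    f x = slope f a b * x + (f a - slope f a b * a) := by
  rcases hx with rfl | rfl
  · ring
  · have h := sub_smul_slope f a x
    rw [smul_eq_mul, vsub_eq_sub] at h
    linear_combination -h

section matLog

variable {m : Type*} [Fintype m] [DecidableEq m]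

theorem matLog_eq_cfc {A : Matrix m m ℂ} (hA : A.IsHermitian) : matLog A = cfc Real.log A := by
  rw [matLog, dif_pos hA, hA.cfc_eq, Matrix.IsHermitian.cfc, Unitary.conjStarAlgAut_apply]
  rfl

theorem matLog_eq_of_mul_eq_zero {A : Matrix m m ℂ} (hA : A.IsHermitian) {a b : ℝ}
    (h : (A - algebraMap ℝ _ a) * (A - algebraMap ℝ _ b) = 0) :
    matLog A = slope Real.log a b • A + algebraMap ℝ _ (Real.log a - slope Real.log a b * a) := by
  rw [matLog_eq_cfc hA, cfc_congr fun x hx ↦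
    eq_slope_mul_add_of_mem_pair Real.log (spectrum_subset_pair_of_mul_eq_zero h hx),
    cfc_add .., cfc_const_mul .., cfc_id' .., cfc_const ..]

theorem qRelEnt_eq_of_matLog_eq {A B : Matrix m m ℂ} {α₀ β₀ α₁ β₁ : ℝ}
    (hA : matLog A = α₀ • A + algebraMap ℝ _ β₀) (hB : matLog B = α₁ • B + algebraMap ℝ _ β₁) :
    qRelEnt A B = α₀ * (A * A).trace.re + (β₀ - β₁) * A.trace.re - α₁ * (A * B).trace.re := by
  simp only [qRelEnt, hA, hB, Algebra.algebraMap_eq_smul_one, mul_sub, mul_add, mul_smul_comm,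
    mul_one, Matrix.trace_sub, Matrix.trace_add, Matrix.trace_smul, Complex.sub_re,
    Complex.add_re, Complex.real_smul, Complex.re_ofReal_mul]
  ring

end matLog

theorem half_one_add_smul_sub_mul_sub_eq_zero {R : Type*} [Ring R] [Algebra ℝ R] {M : R}
    (hM : M * M = 1) (r : ℝ) :
    ((2⁻¹ : ℝ) • (1 + r • M) - algebraMap ℝ R ((1 - r) / 2)) *
      ((2⁻¹ : ℝ) • (1 + r • M) - algebraMap ℝ R ((1 + r) / 2)) = 0 := by
  have h₁ : (2⁻¹ : ℝ) • (1 + r • M) - algebraMap ℝ R ((1 - r) / 2) = (r / 2) • (M + 1) := by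
    rw [Algebra.algebraMap_eq_smul_one]; module
  have h₂ : (2⁻¹ : ℝ) • (1 + r • M) - algebraMap ℝ R ((1 + r) / 2) = (r / 2) • (M - 1) := by
    rw [Algebra.algebraMap_eq_smul_one]; module
  rw [h₁, h₂, smul_mul_smul_comm, add_mul, mul_sub, mul_sub, hM]
  simp

theorem pauliZ_mul_self : pauliZ * pauliZ = 1 := by
  ext i j; fin_cases i <;> fin_cases j <;> simp [pauliZ]

theorem pauliX_mul_self : pauliX * pauliX = 1 := by
  ext i j; fin_cases i <;> fin_cases j <;> simp [pauliX]

theorem pauliZ_mul_pauliX_add_pauliX_mul_pauliZ : pauliZ * pauliX + pauliX * pauliZ = 0 := by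
  ext i j; fin_cases i <;> fin_cases j <;> simp [pauliX, pauliZ]

theorem cos_smul_pauliZ_add_sin_smul_pauliX_mul_self (θ : ℝ) :
    (Real.cos θ • pauliZ + Real.sin θ • pauliX) * (Real.cos θ • pauliZ + Real.sin θ • pauliX)
      = 1 := by
  have h : (Real.cos θ • pauliZ + Real.sin θ • pauliX) * (Real.cos θ • pauliZ + Real.sin θ • pauliX)
      = (Real.cos θ ^ 2 + Real.sin θ ^ 2) • (1 : Matrix (Fin 2) (Fin 2) ℂ)
        + (Real.cos θ * Real.sin θ) • (pauliZ * pauliX + pauliX * pauliZ) := by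
    simp only [add_mul, mul_add, smul_mul_smul_comm, pauliZ_mul_self, pauliX_mul_self]
    module
  rw [h, pauliZ_mul_pauliX_add_pauliX_mul_pauliZ, Real.cos_sq_add_sin_sq]
  simp

/-- The qubit state with Bloch vector `r (sin θ, 0, cos θ)`. -/
noncomputable def blochState (r θ : ℝ) : Matrix (Fin 2) (Fin 2) ℂ :=
  (2⁻¹ : ℝ) • (1 + r • (Real.cos θ • pauliZ + Real.sin θ • pauliX))

theorem isHermitian_blochState (r θ : ℝ) : (blochState r θ).IsHermitian := by
  ext i j
  fin_cases i <;> fin_cases j <;>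
    simp [blochState, pauliX, pauliZ, -Complex.ofReal_cos, -Complex.ofReal_sin]

theorem trace_blochState (r θ : ℝ) : (blochState r θ).trace = 1 := by
  simp [blochState, Matrix.trace_fin_two, pauliX, pauliZ]

theorem trace_blochState_mul_blochState (r s θ φ : ℝ) :
    (blochState r θ * blochState s φ).trace = ((1 + r * s * Real.cos (θ - φ)) / 2 : ℝ) := by
  simp [blochState, Matrix.trace_fin_two, pauliX, pauliZ, Matrix.mul_apply, Real.cos_sub]
  ring

theorem matLog_blochState (r θ : ℝ) :
    matLog (blochState r θ) = slope Real.log ((1 - r) / 2) ((1 + r) / 2) • blochState r θ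
      + algebraMap ℝ _ (Real.log ((1 - r) / 2)
        - slope Real.log ((1 - r) / 2) ((1 + r) / 2) * ((1 - r) / 2)) :=
  matLog_eq_of_mul_eq_zero (isHermitian_blochState r θ)
    (half_one_add_smul_sub_mul_sub_eq_zero (cos_smul_pauliZ_add_sin_smul_pauliX_mul_self θ) r)

theorem slope_log_mul_of_mem_Ioo {r : ℝ} (hr : r ∈ Set.Ioo (-1) 1) :
    slope Real.log ((1 - r) / 2) ((1 + r) / 2) * r = Real.log (1 + r) - Real.log (1 - r) := by
  obtain ⟨h₀, h₁⟩ := hr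
  have h := sub_smul_slope Real.log ((1 - r) / 2) ((1 + r) / 2)
  rw [smul_eq_mul, vsub_eq_sub, Real.log_div (by linarith) two_ne_zero,
    Real.log_div (by linarith) two_ne_zero] at h
  linear_combination h

/-- **Relative entropy of two qubit states.**
For `ρ = ½(I + r₀(cos θ σ_z + sin θ σ_x))` and `σ = ½(I + r₁ σ_z)` with
`r₀, r₁ ∈ [0,1)`,
`D(ρ‖σ) = ½(1+r₀)log((1+r₀)/(1+r₁)) + ½(1−r₀)log((1−r₀)/(1−r₁))
          + r₀ sin²(θ/2) log((1+r₁)/(1−r₁))`. -/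
theorem qubit_relEnt_formula
    (r₀ r₁ : ℝ) (hr₀ : r₀ ∈ Set.Ico (0 : ℝ) 1) (hr₁ : r₁ ∈ Set.Ico (0 : ℝ) 1)
    (θ : ℝ)
    (ρ σ : Matrix (Fin 2) (Fin 2) ℂ)
    (hρ : ρ = (2⁻¹ : ℝ) •
      (1 + r₀ • (Real.cos θ • pauliZ + Real.sin θ • pauliX)))
    (hσ : σ = (2⁻¹ : ℝ) • (1 + r₁ • pauliZ)) :
    qRelEnt ρ σ
      = (1 / 2) * (1 + r₀) * Real.log ((1 + r₀) / (1 + r₁))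
        + (1 / 2) * (1 - r₀) * Real.log ((1 - r₀) / (1 - r₁))
        + r₀ * Real.sin (θ / 2) ^ 2 * Real.log ((1 + r₁) / (1 - r₁)) := by
  obtain ⟨h₀, h₁⟩ := hr₀
  obtain ⟨h₀', h₁'⟩ := hr₁
  have hρ' : ρ = blochState r₀ θ := hρ
  have hσ' : σ = blochState r₁ 0 := by simp [hσ, blochState]
  rw [hρ', hσ', qRelEnt_eq_of_matLog_eq (matLog_blochState r₀ θ) (matLog_blochState r₁ 0),
    trace_blochState, trace_blochState_mul_blochState, trace_blochState_mul_blochState,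
    Complex.ofReal_re, Complex.ofReal_re, Complex.one_re, sub_self, sub_zero, Real.cos_zero,
    Real.sin_sq_eq_half_sub, mul_div_cancel₀ θ two_ne_zero]
  have e₀ := slope_log_mul_of_mem_Ioo (r := r₀) ⟨by linarith, h₁⟩
  have e₁ := slope_log_mul_of_mem_Ioo (r := r₁) ⟨by linarith, h₁'⟩
  rw [Real.log_div (by linarith) two_ne_zero, Real.log_div (by linarith) two_ne_zero,
    Real.log_div (by linarith) (by linarith), Real.log_div (by linarith) (by linarith),
    Real.log_div (by linarith) (by linarith)]
  linear_combination ((1 + r₀) / 2) * e₀ - ((1 + r₀ * Real.cos θ) / 2) * e₁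
end
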